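/- arXiv:2501.03816 — 2 statements merged into one kernel-verified Lean document; each statement's English description precedes it below -/
import Mathlib

section
/- Let q, q̃ ∈ ℝ, let D be a positive, 1-periodic, C² function and r a continuous 1-periodic function. Suppose that for every λ ∈ ℝ we are given a principal eigenpair (k(λ), ψ_λ) of L_q^λ[r;D] and a principal eigenpair (k̃(λ), φ_λ) of L_{q̃}^λ[r;D], and assume k(0) > k̃(0) > 0. Then there exists κ₀ ∈ (0, k̃(0)) such that for every κ ∈ (κ₀, k̃(0)) one has inf_{λ>0} (k(λ) − κ)/λ > inf_{λ>0} (k̃(λ) − κ)/λ > 0. -/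
/-!
Write `L_λ` for `L_q^λ[r;D]` and let `(k(0), ψ₀)` be the principal eigenpair at `λ = 0`. Take the
positive periodic `F` with `ψ₀² D^(1+q) F` constant and `∫₀¹ F = 1`, and let `χ` be the periodic
primitive of `1 - F`. Then `L_λ (e^(λχ) ψ₀) = (k(0) + λ² D F²) e^(λχ) ψ₀`, and comparing with the
principal eigenfunction at an extremum of their ratio gives `k(0) + m λ² ≤ k(λ) ≤ k(0) + M λ²`
with `m, M > 0`. So `inf_{λ>0} (k(λ) - κ)/λ` lies between `2√(m (k(0) - κ))` and
`2√(M (k(0) - κ))`: as `κ ↑ k̃(0)` the speed for `q̃` tends to `0` (staying positive), while the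
speed for `q` stays above `2√(m (k(0) - k̃(0)))`.
-/

open Real MeasureTheory Set Filter Topology

noncomputable section

/-- The operator `L_q^λ[r;D]` acting on C² functions `ψ`:
`(L_q^λ[r;D]ψ)(x) = D ψ'' + ((1+q)D' − 2λD) ψ' + (qD'' + λ²D − (1+q)λD' + r) ψ`. -/
def Lop (q lam : ℝ) (r D ψ : ℝ → ℝ) (x : ℝ) : ℝ :=
  D x * deriv (deriv ψ) x + ((1 + q) * deriv D x - 2 * lam * D x) * deriv ψ x +
    (q * deriv (deriv D) x + lam ^ 2 * D x - (1 + q) * lam * deriv D x + r x) * ψ x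

/-- `(k, ψ)` is a principal eigenpair of `L_q^λ[r;D]`: `ψ` is a positive, 1-periodic,
C² function with `L_q^λ[r;D]ψ = kψ`. -/
def IsEigenpair (q lam : ℝ) (r D : ℝ → ℝ) (k : ℝ) (ψ : ℝ → ℝ) : Prop :=
  ContDiff ℝ 2 ψ ∧ (∀ x, 0 < ψ x) ∧ Function.Periodic ψ 1 ∧
    ∀ x, Lop q lam r D ψ x = k * ψ x

/-- The Freidlin–Gärtner infimum `inf_{λ>0} k(λ)/λ`, as an extended real number. -/
def speed (k : ℝ → ℝ) : EReal := ⨅ l : {l : ℝ // 0 < l}, ((k l.1 / l.1 : ℝ) : EReal)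

theorem IsLocalMax.deriv_deriv_nonpos {f : ℝ → ℝ} {x₀ : ℝ} (h : IsLocalMax f x₀)
    (hc : ContinuousAt f x₀) : deriv (deriv f) x₀ ≤ 0 := by
  by_contra! hpos
  -- the second-derivative test makes `x₀` a local minimum as well, so `f` is locally constant
  have hmin := isLocalMin_of_deriv_deriv_pos hpos h.deriv_eq_zero hc
  have hconst : f =ᶠ[𝓝 x₀] fun _ => f x₀ := (hmin.and h).mono fun x hx => le_antisymm hx.2 hx.1
  have hderiv : deriv f =ᶠ[𝓝 x₀] fun _ => 0 :=
    hconst.eventuallyEq_nhds.mono fun x hx => by rw [hx.deriv_eq, deriv_const]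
  rw [hderiv.deriv_eq, deriv_const] at hpos
  exact hpos.false

theorem Function.Periodic.exists_forall_le_of_continuous {α : Type*} [TopologicalSpace α]
    [LinearOrder α] [ClosedIciTopology α] {f : ℝ → α} {c : ℝ} (hp : Function.Periodic f c)
    (hc : c ≠ 0) (hf : Continuous f) : ∃ x₀, ∀ x, f x ≤ f x₀ := by
  obtain ⟨_, ⟨x₀, rfl⟩, hx₀⟩ :=
    (hp.compact_of_continuous hc hf).exists_isGreatest (range_nonempty f)
  exact ⟨x₀, fun x => hx₀ ⟨x, rfl⟩⟩

theorem Function.Periodic.exists_forall_ge_of_continuous {α : Type*} [TopologicalSpace α]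
    [LinearOrder α] [ClosedIicTopology α] {f : ℝ → α} {c : ℝ} (hp : Function.Periodic f c)
    (hc : c ≠ 0) (hf : Continuous f) : ∃ x₀, ∀ x, f x₀ ≤ f x := by
  obtain ⟨_, ⟨x₀, rfl⟩, hx₀⟩ :=
    (hp.compact_of_continuous hc hf).exists_isLeast (range_nonempty f)
  exact ⟨x₀, fun x => hx₀ ⟨x, rfl⟩⟩

theorem Function.Periodic.periodic_intervalIntegral {E : Type*} [NormedAddCommGroup E]
    [NormedSpace ℝ E] {g : ℝ → E} {T : ℝ} (hg : Function.Periodic g T)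
    (hint : ∀ a b, IntervalIntegrable g volume a b) (h0 : ∫ t in 0..T, g t = 0) :
    Function.Periodic (fun x => ∫ t in 0..x, g t) T := fun x => by
  simpa [h0] using hg.intervalIntegral_add_eq_add 0 x hint

section Operator

variable {q lam : ℝ} {r D : ℝ → ℝ}

theorem Lop_mul {h v : ℝ → ℝ} (hh : ContDiff ℝ 2 h) (hv : ContDiff ℝ 2 v) (x : ℝ) :
    Lop q lam r D (fun y => h y * v y) x = h x * Lop q lam r D v x +
      D x * (deriv (deriv h) x * v x + 2 * deriv h x * deriv v x) +
      ((1 + q) * deriv D x - 2 * lam * D x) * deriv h x * v x := by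
  have hh1 := hh.differentiable two_ne_zero
  have hv1 := hv.differentiable two_ne_zero
  have hd : deriv (fun y => h y * v y) = fun y => deriv h y * v y + h y * deriv v y :=
    funext fun y => deriv_mul (hh1 y) (hv1 y)
  have hdd : deriv (deriv fun y => h y * v y) x = deriv (deriv h) x * v x +
      2 * deriv h x * deriv v x + h x * deriv (deriv v) x := by
    have : HasDerivAt (fun y => deriv h y * v y + h y * deriv v y) _ x :=
      ((hh.differentiable_deriv_two x).hasDerivAt.mul (hv1 x).hasDerivAt).add
        ((hh1 x).hasDerivAt.mul (hv.differentiable_deriv_two x).hasDerivAt)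
    rw [hd, this.deriv]
    ring
  rw [Lop, hdd, hd, Lop]
  ring

theorem Lop_mul_le_mul_Lop_of_isLocalMax {u v : ℝ → ℝ} {x₀ : ℝ} (hu : ContDiff ℝ 2 u)
    (hv : ContDiff ℝ 2 v) (hvpos : ∀ x, 0 < v x) (hD : 0 ≤ D x₀)
    (hmax : IsLocalMax (fun x => u x / v x) x₀) :
    Lop q lam r D u x₀ * v x₀ ≤ u x₀ * Lop q lam r D v x₀ := by
  set h := fun x => u x / v x
  have hh : ContDiff ℝ 2 h := hu.div hv fun x => (hvpos x).ne'
  have hu_eq : u = fun x => h x * v x := funext fun x => by simp [h, (hvpos x).ne']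
  have hdd : deriv (deriv h) x₀ ≤ 0 := hmax.deriv_deriv_nonpos hh.continuous.continuousAt
  have hux₀ : u x₀ = h x₀ * v x₀ := congrFun hu_eq x₀
  rw [hu_eq, Lop_mul hh hv, hmax.deriv_eq_zero, ← hu_eq, hux₀]
  nlinarith [mul_nonpos_of_nonneg_of_nonpos (mul_nonneg hD (sq_nonneg (v x₀))) hdd]

theorem exists_Lop_mul_le_mul_Lop {u v : ℝ → ℝ} (hu : ContDiff ℝ 2 u) (hv : ContDiff ℝ 2 v)
    (hvpos : ∀ x, 0 < v x) (huper : Function.Periodic u 1) (hvper : Function.Periodic v 1)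
    (hD : ∀ x, 0 ≤ D x) : ∃ x₀, Lop q lam r D u x₀ * v x₀ ≤ u x₀ * Lop q lam r D v x₀ := by
  have hper : Function.Periodic (fun x => u x / v x) 1 := fun x => by simp [huper x, hvper x]
  obtain ⟨x₀, hx₀⟩ := hper.exists_forall_le_of_continuous one_ne_zero
    (hu.continuous.div hv.continuous fun x => (hvpos x).ne')
  exact ⟨x₀, Lop_mul_le_mul_Lop_of_isLocalMax hu hv hvpos (hD x₀) (.of_forall hx₀)⟩

theorem IsEigenpair.le_of_Lop_le {k c : ℝ} {φ ψ : ℝ → ℝ} (hφ : IsEigenpair q lam r D k φ)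
    (hD : ∀ x, 0 ≤ D x) (hψ : ContDiff ℝ 2 ψ) (hψpos : ∀ x, 0 < ψ x)
    (hψper : Function.Periodic ψ 1) (hc : ∀ x, Lop q lam r D ψ x ≤ c * ψ x) : k ≤ c := by
  obtain ⟨hφ2, hφpos, hφper, hφeig⟩ := hφ
  obtain ⟨x₀, hx₀⟩ := exists_Lop_mul_le_mul_Lop hφ2 hψ hψpos hφper hψper hD
  rw [hφeig] at hx₀
  have := mul_le_mul_of_nonneg_left (hc x₀) (hφpos x₀).le
  nlinarith [mul_pos (hφpos x₀) (hψpos x₀)]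

theorem IsEigenpair.le_of_le_Lop {k c : ℝ} {φ ψ : ℝ → ℝ} (hφ : IsEigenpair q lam r D k φ)
    (hD : ∀ x, 0 ≤ D x) (hψ : ContDiff ℝ 2 ψ) (hψpos : ∀ x, 0 < ψ x)
    (hψper : Function.Periodic ψ 1) (hc : ∀ x, c * ψ x ≤ Lop q lam r D ψ x) : c ≤ k := by
  obtain ⟨hφ2, hφpos, hφper, hφeig⟩ := hφ
  obtain ⟨x₀, hx₀⟩ := exists_Lop_mul_le_mul_Lop hψ hφ2 hφpos hψper hφper hD
  rw [hφeig] at hx₀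
  have := mul_le_mul_of_nonneg_right (hc x₀) (hφpos x₀).le
  nlinarith [mul_pos (hφpos x₀) (hψpos x₀)]

end Operator

theorem exists_normalized_periodic_solution (q : ℝ) {D ψ : ℝ → ℝ} (hD : ContDiff ℝ 2 D)
    (hDpos : ∀ x, 0 < D x) (hDper : Function.Periodic D 1) (hψ : ContDiff ℝ 2 ψ)
    (hψpos : ∀ x, 0 < ψ x) (hψper : Function.Periodic ψ 1) :
    ∃ F : ℝ → ℝ, ContDiff ℝ 2 F ∧ (∀ x, 0 < F x) ∧ Function.Periodic F 1 ∧
      ∫ x in 0..1, F x = 1 ∧ ∀ x, D x * ψ x * deriv F x +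
        (2 * D x * deriv ψ x + (1 + q) * deriv D x * ψ x) * F x = 0 := by
  have hDne : ∀ x, D x ≠ 0 := fun x => (hDpos x).ne'
  have hψne : ∀ x, ψ x ≠ 0 := fun x => (hψpos x).ne'
  -- `G = (ψ² D^(1+q))⁻¹`, and the equation says exactly that `ψ² D^(1+q) G` is constant
  set G : ℝ → ℝ := fun x => exp (-(2 * log (ψ x) + (1 + q) * log (D x)))
  have hG : ContDiff ℝ 2 G :=
    ((contDiff_const.mul (hψ.log hψne)).add (contDiff_const.mul (hD.log hDne))).neg.exp
  have hGd : ∀ x, HasDerivAt G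
      (G x * -(2 * (deriv ψ x / ψ x) + (1 + q) * (deriv D x / D x))) x := fun x =>
    ((((hψ.differentiable two_ne_zero x).hasDerivAt.log (hψne x)).const_mul 2).add
      (((hD.differentiable two_ne_zero x).hasDerivAt.log (hDne x)).const_mul (1 + q))).neg.exp
  set c := ∫ x in 0..1, G x
  have hc : 0 < c := intervalIntegral.intervalIntegral_pos_of_pos
    (hG.continuous.intervalIntegrable 0 1) (fun x => exp_pos _) one_pos
  refine ⟨fun x => G x / c, hG.div_const c, fun x => div_pos (exp_pos _) hc,
    fun x => by simp [G, hψper x, hDper x], by rw [intervalIntegral.integral_div, div_self hc.ne'],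
    fun x => ?_⟩
  rw [((hGd x).div_const c).deriv]
  field_simp [hDne x, hψne x]
  ring

theorem IsEigenpair.exists_Lop_eq_add_sq_mul {q k₀ : ℝ} {r D ψ : ℝ → ℝ} (hD : ContDiff ℝ 2 D)
    (hDpos : ∀ x, 0 < D x) (hDper : Function.Periodic D 1) (hψ : IsEigenpair q 0 r D k₀ ψ) :
    ∃ f : ℝ → ℝ, Continuous f ∧ Function.Periodic f 1 ∧ (∀ x, 0 < f x) ∧ ∀ lam : ℝ,
      ∃ Ψ : ℝ → ℝ, ContDiff ℝ 2 Ψ ∧ (∀ x, 0 < Ψ x) ∧ Function.Periodic Ψ 1 ∧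
        ∀ x, Lop q lam r D Ψ x = (k₀ + lam ^ 2 * f x) * Ψ x := by
  obtain ⟨hψ2, hψpos, hψper, hψeig⟩ := hψ
  obtain ⟨F, hF, hFpos, hFper, hFint, hFode⟩ :=
    exists_normalized_periodic_solution q hD hDpos hDper hψ2 hψpos hψper
  set χ : ℝ → ℝ := fun x => ∫ t in 0..x, (1 - F t)
  have hcont : Continuous fun t => 1 - F t := continuous_const.sub hF.continuous
  have hχd : ∀ x, HasDerivAt χ (1 - F x) x := fun x =>
    (hcont.integral_hasStrictDerivAt 0 x).hasDerivAt
  have hχ : ContDiff ℝ 2 χ := by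
    rw [show (2 : WithTop ℕ∞) = 1 + 1 from rfl, contDiff_succ_iff_deriv]
    refine ⟨fun x => (hχd x).differentiableAt, by simp, ?_⟩
    rw [show deriv χ = fun x => 1 - F x from funext fun x => (hχd x).deriv]
    exact contDiff_const.sub (hF.of_le one_le_two)
  have hχper : Function.Periodic χ 1 := by
    refine Function.Periodic.periodic_intervalIntegral (fun x => by simp [hFper x])
      (fun a b => hcont.intervalIntegrable a b) ?_
    rw [intervalIntegral.integral_sub intervalIntegrable_const
      (hF.continuous.intervalIntegrable 0 1), hFint]
    simp
  refine ⟨fun x => D x * F x ^ 2, hD.continuous.mul (hF.continuous.pow 2),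
    fun x => by simp [hDper x, hFper x], fun x => mul_pos (hDpos x) (pow_pos (hFpos x) 2),
    fun lam => ?_⟩
  set E : ℝ → ℝ := fun x => exp (lam * χ x)
  have hE : ContDiff ℝ 2 E := (contDiff_const.mul hχ).exp
  have hEd : ∀ x, HasDerivAt E (E x * (lam * (1 - F x))) x := fun x =>
    ((hχd x).const_mul lam).exp
  have hEd' : deriv E = fun x => E x * (lam * (1 - F x)) := funext fun x => (hEd x).deriv
  have hEdd : ∀ x, deriv (deriv E) x = E x * (lam * (1 - F x)) * (lam * (1 - F x)) +
      E x * (lam * -deriv F x) := fun x => by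
    rw [hEd']
    exact ((hEd x).mul (((hF.differentiable two_ne_zero x).hasDerivAt.const_sub 1).const_mul
      lam)).deriv.trans (by ring)
  refine ⟨fun x => E x * ψ x, hE.mul hψ2, fun x => mul_pos (exp_pos _) (hψpos x),
    fun x => by simp [E, hχper x, hψper x], fun x => ?_⟩
  have heig := hψeig x
  rw [Lop_mul hE hψ2, hEdd, hEd']
  simp only [Lop] at heig ⊢
  linear_combination E x * heig - lam * E x * hFode x

theorem exists_quadratic_bounds_of_isEigenpair {q : ℝ} {r D k : ℝ → ℝ} {ψ : ℝ → ℝ → ℝ}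
    (hD : ContDiff ℝ 2 D) (hDpos : ∀ x, 0 < D x) (hDper : Function.Periodic D 1)
    (hk : ∀ lam, IsEigenpair q lam r D (k lam) (ψ lam)) :
    ∃ m M : ℝ, 0 < m ∧ 0 < M ∧ ∀ lam, k 0 + m * lam ^ 2 ≤ k lam ∧ k lam ≤ k 0 + M * lam ^ 2 := by
  obtain ⟨f, hf, hfper, hfpos, hΨ⟩ := (hk 0).exists_Lop_eq_add_sq_mul hD hDpos hDper
  obtain ⟨xm, hxm⟩ := hfper.exists_forall_ge_of_continuous one_ne_zero hf
  obtain ⟨xM, hxM⟩ := hfper.exists_forall_le_of_continuous one_ne_zero hf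
  refine ⟨f xm, f xM, hfpos xm, hfpos xM, fun lam => ?_⟩
  obtain ⟨Ψ, hΨ2, hΨpos, hΨper, hLΨ⟩ := hΨ lam
  have hD' : ∀ x, 0 ≤ D x := fun x => (hDpos x).le
  constructor
  · refine (hk lam).le_of_le_Lop hD' hΨ2 hΨpos hΨper fun x => ?_
    rw [hLΨ]
    have := mul_le_mul_of_nonneg_left (hxm x) (sq_nonneg lam)
    exact mul_le_mul_of_nonneg_right (by linarith) (hΨpos x).le
  · refine (hk lam).le_of_Lop_le hD' hΨ2 hΨpos hΨper fun x => ?_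
    rw [hLΨ]
    have := mul_le_mul_of_nonneg_left (hxM x) (sq_nonneg lam)
    exact mul_le_mul_of_nonneg_right (by linarith) (hΨpos x).le

section Speed

variable {g : ℝ → ℝ} {a m : ℝ}

theorem two_sqrt_mul_le_speed (ha : 0 ≤ a) (hm : 0 ≤ m)
    (hg : ∀ l, 0 < l → a + m * l ^ 2 ≤ g l) : ((2 * √(m * a) : ℝ) : EReal) ≤ speed g := by
  refine le_iInf fun ⟨l, hl⟩ => EReal.coe_le_coe_iff.mpr ?_
  rw [le_div_iff₀ hl, sqrt_mul hm]
  -- AM-GM: `2 √m √a l ≤ a + m l²`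
  nlinarith [hg l hl, sq_nonneg (√m * l - √a), sq_sqrt hm, sq_sqrt ha]

theorem speed_le_two_sqrt_mul (ha : 0 < a) (hm : 0 < m)
    (hg : ∀ l, 0 < l → g l ≤ a + m * l ^ 2) : speed g ≤ ((2 * √(m * a) : ℝ) : EReal) := by
  -- the infimum of `(a + m l²) / l` is attained at `l = √a / √m`
  have hl : 0 < √a / √m := div_pos (sqrt_pos.mpr ha) (sqrt_pos.mpr hm)
  refine (iInf_le _ ⟨√a / √m, hl⟩).trans (EReal.coe_le_coe_iff.mpr ?_)
  rw [div_le_iff₀ hl, sqrt_mul hm.le]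
  have := hg _ hl
  field_simp at this ⊢
  nlinarith [sq_sqrt hm.le, sq_sqrt ha.le, sqrt_pos.mpr hm]

end Speed

theorem stmt_5_general (q qt : ℝ) (D r : ℝ → ℝ) (hD : ContDiff ℝ 2 D) (hDpos : ∀ x, 0 < D x)
    (hDper : Function.Periodic D 1)
    (k kt : ℝ → ℝ) (ψ φ : ℝ → ℝ → ℝ)
    (hk : ∀ lam : ℝ, IsEigenpair q lam r D (k lam) (ψ lam))
    (hkt : ∀ lam : ℝ, IsEigenpair qt lam r D (kt lam) (φ lam))
    (h0 : kt 0 < k 0) (h0' : 0 < kt 0) :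
    ∃ κ₀ ∈ Set.Ioo 0 (kt 0), ∀ κ ∈ Set.Ioo κ₀ (kt 0),
      (0 : EReal) < speed (fun l => kt l - κ) ∧
        speed (fun l => kt l - κ) < speed (fun l => k l - κ) := by
  obtain ⟨m, _, hm, _, hk_bounds⟩ := exists_quadratic_bounds_of_isEigenpair hD hDpos hDper hk
  obtain ⟨m', M', hm', hM', hkt_bounds⟩ :=
    exists_quadratic_bounds_of_isEigenpair hD hDpos hDper hkt
  refine ⟨max (kt 0 - m * (k 0 - kt 0) / M') (kt 0 / 2), ⟨by positivity, max_lt ?_ ?_⟩, ?_⟩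
  · linarith [div_pos (mul_pos hm (sub_pos.mpr h0)) hM']
  · linarith
  rintro κ ⟨hκ₀, hκ⟩
  have hε : 0 < kt 0 - κ := sub_pos.mpr hκ
  have hsmall : M' * (kt 0 - κ) < m * (k 0 - κ) := by
    have := (le_max_left _ _).trans_lt hκ₀
    rw [sub_lt_comm, lt_div_iff₀ hM'] at this
    nlinarith
  constructor
  · calc (0 : EReal) < ((2 * √(m' * (kt 0 - κ)) : ℝ) : EReal) := by
          exact_mod_cast by positivity
      _ ≤ _ := two_sqrt_mul_le_speed hε.le hm'.le fun l _ => by linarith [(hkt_bounds l).1]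
  · calc speed (fun l => kt l - κ) ≤ ((2 * √(M' * (kt 0 - κ)) : ℝ) : EReal) :=
          speed_le_two_sqrt_mul hε hM' fun l _ => by linarith [(hkt_bounds l).2]
      _ < ((2 * √(m * (k 0 - κ)) : ℝ) : EReal) := by
          exact_mod_cast by gcongr
      _ ≤ speed (fun l => k l - κ) :=
          two_sqrt_mul_le_speed (by linarith) hm.le fun l _ => by linarith [(hk_bounds l).1]

/-- Proposition `compar_persist_speed`. If `k_q^0[r;D] > k_{q̃}^0[r;D] > 0`,
then there is `κ₀ ∈ (0, k_{q̃}^0)` such that for all `κ ∈ (κ₀, k_{q̃}^0)` the spreading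
speeds satisfy `c_q*[r−κ;D] > c_{q̃}*[r−κ;D] > 0`. -/
theorem stmt_5 (q qt : ℝ) (D r : ℝ → ℝ) (hD : ContDiff ℝ 2 D) (hDpos : ∀ x, 0 < D x)
    (hDper : Function.Periodic D 1) (hr : Continuous r) (hrper : Function.Periodic r 1)
    (k kt : ℝ → ℝ) (ψ φ : ℝ → ℝ → ℝ)
    (hk : ∀ lam : ℝ, IsEigenpair q lam r D (k lam) (ψ lam))
    (hkt : ∀ lam : ℝ, IsEigenpair qt lam r D (kt lam) (φ lam))
    (h0 : kt 0 < k 0) (h0' : 0 < kt 0) :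
    ∃ κ₀ ∈ Set.Ioo 0 (kt 0), ∀ κ ∈ Set.Ioo κ₀ (kt 0),
      (0 : EReal) < speed (fun l => kt l - κ) ∧
        speed (fun l => kt l - κ) < speed (fun l => k l - κ) :=
  stmt_5_general q qt D r hD hDpos hDper k kt ψ φ hk hkt h0 h0'
end
end

section
/- Fix q ∈ ℝ, a positive, 1-periodic, C² function D and a continuous 1-periodic function r. Suppose that for every B > 0 we are given k(B) ∈ ℝ and a positive, 1-periodic, C² function ψ_B with L_q^0[r; B·D]ψ_B = k(B)·ψ_B. Then k(B) → (∫₀¹ r(x)·D(x)^{−q} dx) / (∫₀¹ D(x)^{−q} dx) as B → +∞. -/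
/-!
For `λ = 0` the operator is in divergence form, `L_q^0[r; B·D]ψ = B·F' + rψ` with the flux
`F = Dψ' + qD'ψ = D^{1-q} (D^q ψ)'`. Integrating the eigenvalue equation over a period gives
`k ∫ψ = ∫ rψ`, so `|k| ≤ max |r|`. Since `F` vanishes somewhere (Rolle for the periodic `D^q ψ`)
and `|F'| ≤ 2 max|r| ψ / B`, we get `|F| ≤ 2 max|r| ∫ψ / B`; hence `u = D^q ψ` stays within
`O(1/B)` of its mean in relative terms, and `k = ∫ r D^{-q} u / ∫ D^{-q} u` tends to the
`D^{-q}`-weighted mean of `r`.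
-/

open Real MeasureTheory Set Filter Topology

noncomputable section

open intervalIntegral Function

theorem Function.Periodic.deriv {f : ℝ → ℝ} {c : ℝ} (h : Periodic f c) :
    Periodic (deriv f) c := fun x => by
  rw [← deriv_comp_add_const, funext h]

theorem Function.Periodic.exists_abs_le {f : ℝ → ℝ} {c : ℝ} (h : Periodic f c) (hc : c ≠ 0)
    (hf : Continuous f) : ∃ M, ∀ x, |f x| ≤ M := by
  obtain ⟨M, hM⟩ := (h.isBounded_of_continuous hc hf).exists_norm_le
  exact ⟨M, fun x => hM _ (mem_range_self x)⟩

theorem Function.Periodic.integral_eq_zero_of_hasDerivAt {F f : ℝ → ℝ} {c : ℝ}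
    (hF : Periodic F c) (hderiv : ∀ x, HasDerivAt F (f x) x)
    (hf : IntervalIntegrable f volume 0 c) : ∫ x in (0 : ℝ)..c, f x = 0 := by
  rw [integral_eq_sub_of_hasDerivAt (fun x _ => hderiv x) hf, ← zero_add c, hF 0, sub_self]

theorem Function.Periodic.abs_le_integral_of_hasDerivAt {F f h : ℝ → ℝ} {c : ℝ}
    (hF : Periodic F c) (hc : 0 < c) (hderiv : ∀ x, HasDerivAt F (f x) x) (hf : Continuous f)
    (hh : Continuous h) (hhper : Periodic h c) (hfh : ∀ x, |f x| ≤ h x) {x₀ : ℝ}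
    (hx₀ : F x₀ = 0) (y : ℝ) : |F y| ≤ ∫ x in (0 : ℝ)..c, h x := by
  obtain ⟨z, hz, hFz⟩ := hF.exists_mem_Ico hc y x₀
  have hFTC : F z = ∫ t in x₀..z, f t := by
    rw [integral_eq_sub_of_hasDerivAt (fun t _ => hderiv t) (hf.intervalIntegrable _ _), hx₀,
      sub_zero]
  calc |F y| = |∫ t in x₀..z, f t| := by rw [hFz, hFTC]
    _ ≤ ∫ t in x₀..z, |f t| := abs_integral_le_integral_abs hz.1
    _ ≤ ∫ t in x₀..z, h t :=
        integral_mono_on hz.1 (hf.abs.intervalIntegrable _ _) (hh.intervalIntegrable _ _)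
          fun t _ => hfh t
    _ ≤ ∫ t in x₀..x₀ + c, h t :=
        integral_mono_interval le_rfl hz.1 hz.2.le
          (ae_of_all _ fun t => (abs_nonneg _).trans (hfh t)) (hh.intervalIntegrable _ _)
    _ = ∫ t in (0 : ℝ)..c, h t := by simpa using hhper.intervalIntegral_add_eq x₀ 0

theorem abs_sub_integral_le_of_hasDerivAt {f f' : ℝ → ℝ} {ε : ℝ}
    (hf : ∀ x, HasDerivAt f (f' x) x) (hbound : ∀ x ∈ Icc (0 : ℝ) 1, |f' x| ≤ ε) {x : ℝ}
    (hx : x ∈ Icc (0 : ℝ) 1) : |f x - ∫ y in (0 : ℝ)..1, f y| ≤ ε := by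
  have hcont : Continuous f := continuous_iff_continuousAt.2 fun x => (hf x).continuousAt
  have hosc : ∀ y ∈ Icc (0 : ℝ) 1, |f x - f y| ≤ ε := fun y hy => by
    have hmvt := (convex_Icc (0 : ℝ) 1).norm_image_sub_le_of_norm_hasDerivWithin_le
      (fun z _ => (hf z).hasDerivWithinAt) hbound hy hx
    have hε : 0 ≤ ε := (abs_nonneg _).trans (hbound 0 ⟨le_rfl, zero_le_one⟩)
    have hxy : |x - y| ≤ 1 :=
      abs_sub_le_iff.2 ⟨by linarith [hx.2, hy.1], by linarith [hx.1, hy.2]⟩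
    calc |f x - f y| ≤ ε * |x - y| := hmvt
      _ ≤ ε := mul_le_of_le_one_right hε hxy
  calc |f x - ∫ y in (0 : ℝ)..1, f y| = ‖∫ y in (0 : ℝ)..1, (f x - f y)‖ := by
        rw [integral_sub intervalIntegrable_const (hcont.intervalIntegrable _ _),
          intervalIntegral.integral_const]
        simp
    _ ≤ ε * |(1 : ℝ) - 0| :=
        norm_integral_le_of_norm_le_const fun y hy =>
          hosc y (Ioc_subset_Icc_self (by rwa [uIoc_of_le zero_le_one] at hy))
    _ = ε := by simp

theorem abs_le_of_mul_integral_eq_integral_mul {k M : ℝ} {r ψ : ℝ → ℝ} (hr : Continuous r)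
    (hψ : Continuous ψ) (hψpos : ∀ x, 0 < ψ x) (hM : ∀ x, |r x| ≤ M)
    (h : k * ∫ x in (0 : ℝ)..1, ψ x = ∫ x in (0 : ℝ)..1, r x * ψ x) : |k| ≤ M := by
  have hJ : 0 < ∫ x in (0 : ℝ)..1, ψ x :=
    intervalIntegral_pos_of_pos_on (hψ.intervalIntegrable _ _) (fun x _ => hψpos x) one_pos
  refine le_of_mul_le_mul_right ?_ hJ
  calc |k| * ∫ x in (0 : ℝ)..1, ψ x = |∫ x in (0 : ℝ)..1, r x * ψ x| := by
        rw [← h, abs_mul, abs_of_pos hJ]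
    _ ≤ ∫ x in (0 : ℝ)..1, |r x * ψ x| := abs_integral_le_integral_abs zero_le_one
    _ ≤ ∫ x in (0 : ℝ)..1, M * ψ x :=
        integral_mono_on zero_le_one ((hr.mul hψ).abs.intervalIntegrable _ _)
          ((continuous_const.mul hψ).intervalIntegrable _ _) fun x _ => by
          rw [abs_mul, abs_of_pos (hψpos x)]
          exact mul_le_mul_of_nonneg_right (hM x) (hψpos x).le
    _ = M * ∫ x in (0 : ℝ)..1, ψ x := intervalIntegral.integral_const_mul _ _

theorem tendsto_integral_mul_of_abs_sub_one_le {g : ℝ → ℝ} (hg : Continuous g)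
    {v : ℝ → ℝ → ℝ} (hv : ∀ B > 0, Continuous (v B)) {C : ℝ}
    (hvC : ∀ B > 0, ∀ x ∈ Icc (0 : ℝ) 1, |v B x - 1| ≤ C / B) :
    Tendsto (fun B => ∫ x in (0 : ℝ)..1, g x * v B x) atTop (𝓝 (∫ x in (0 : ℝ)..1, g x)) := by
  obtain ⟨G, hG⟩ :=
    isCompact_Icc.exists_bound_of_continuousOn (hg.continuousOn (s := Icc (0 : ℝ) 1))
  rw [tendsto_iff_norm_sub_tendsto_zero]
  refine squeeze_zero' (Eventually.of_forall fun B => norm_nonneg _) ?_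
    ((tendsto_const_nhds (x := G * C)).div_atTop tendsto_id)
  filter_upwards [eventually_gt_atTop 0] with B hB
  have hdiff : (∫ x in (0 : ℝ)..1, g x * v B x) - ∫ x in (0 : ℝ)..1, g x
      = ∫ x in (0 : ℝ)..1, g x * (v B x - 1) := by
    rw [← integral_sub (f := fun x => g x * v B x)
      ((hg.mul (hv B hB)).intervalIntegrable _ _) (hg.intervalIntegrable _ _)]
    exact integral_congr fun x _ => by ring
  rw [hdiff]
  calc ‖∫ x in (0 : ℝ)..1, g x * (v B x - 1)‖ ≤ G * (C / B) * |(1 : ℝ) - 0| :=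
        norm_integral_le_of_norm_le_const fun x hx => by
          have hx' : x ∈ Icc (0 : ℝ) 1 :=
            Ioc_subset_Icc_self (by rwa [uIoc_of_le zero_le_one] at hx)
          rw [norm_mul]
          exact mul_le_mul (hG x hx') (hvC B hB x hx') (norm_nonneg _)
            ((norm_nonneg _).trans (hG x hx'))
    _ = G * C / id B := by simp [mul_div_assoc]

section Eigenpair

variable {q B k : ℝ} {D r ψ : ℝ → ℝ}

def flux (q : ℝ) (D ψ : ℝ → ℝ) (x : ℝ) : ℝ := D x * deriv ψ x + q * deriv D x * ψ x

theorem periodic_flux (hD : Periodic D 1) (hψ : Periodic ψ 1) :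
    Periodic (flux q D ψ) 1 := fun x => by
  rw [flux, flux, hD x, hψ x, hD.deriv x, hψ.deriv x]

theorem hasDerivAt_rpow_mul (hD : Differentiable ℝ D) (hDpos : ∀ x, 0 < D x)
    (hψ : Differentiable ℝ ψ) (x : ℝ) :
    HasDerivAt (fun y => D y ^ q * ψ y) (D x ^ (q - 1) * flux q D ψ x) x := by
  have hDq : HasDerivAt (fun y => D y ^ q) (deriv D x * q * D x ^ (q - 1)) x :=
    (hD x).hasDerivAt.rpow_const (Or.inl (hDpos x).ne')
  refine (hDq.mul (hψ x).hasDerivAt).congr_deriv ?_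
  have hq : D x ^ (q - 1) * D x = D x ^ q := by
    rw [rpow_sub_one (hDpos x).ne', div_mul_cancel₀ _ (hDpos x).ne']
  rw [flux]
  linear_combination -(deriv ψ x * hq)

theorem exists_flux_eq_zero (hD : Differentiable ℝ D) (hDpos : ∀ x, 0 < D x)
    (hDper : Periodic D 1) (hψ : Differentiable ℝ ψ) (hψper : Periodic ψ 1) :
    ∃ x₀, flux q D ψ x₀ = 0 := by
  have hu := hasDerivAt_rpow_mul (q := q) hD hDpos hψ
  have hu_per : Periodic (fun y => D y ^ q * ψ y) 1 := fun y => by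
    simp only [hDper y, hψper y]
  obtain ⟨x₀, -, hx₀⟩ := exists_hasDerivAt_eq_zero one_pos
    (continuous_iff_continuousAt.2 fun x => (hu x).continuousAt).continuousOn
    (by simpa using (hu_per 0).symm) fun x _ => hu x
  exact ⟨x₀, (mul_eq_zero.1 hx₀).resolve_left (rpow_pos_of_pos (hDpos x₀) _).ne'⟩

namespace IsEigenpair

variable (he : IsEigenpair q 0 r (fun x => B * D x) k ψ)
include he

theorem hasDerivAt_flux (hB : B ≠ 0) (hD : ContDiff ℝ 2 D) (x : ℝ) :
    HasDerivAt (flux q D ψ) ((k - r x) * ψ x / B) x := by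
  obtain ⟨hψ, -, -, heq⟩ := he
  have hD1 := hD.differentiable two_ne_zero
  have hψ1 := hψ.differentiable two_ne_zero
  have h := ((hD1 x).hasDerivAt.mul (hψ.differentiable_deriv_two x).hasDerivAt).add
    (((hD.differentiable_deriv_two x).hasDerivAt.const_mul q).mul (hψ1 x).hasDerivAt)
  refine h.congr_deriv ?_
  have hLop := heq x
  simp only [Lop, deriv_const_mul_field'] at hLop
  rw [eq_div_iff hB]
  linear_combination hLop

theorem mul_integral_eq (hB : B ≠ 0) (hD : ContDiff ℝ 2 D) (hDper : Periodic D 1)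
    (hr : Continuous r) :
    k * ∫ x in (0 : ℝ)..1, ψ x = ∫ x in (0 : ℝ)..1, r x * ψ x := by
  have hψ := he.1.continuous
  have hzero := (periodic_flux (q := q) hDper he.2.2.1).integral_eq_zero_of_hasDerivAt
    (he.hasDerivAt_flux hB hD)
    ((((continuous_const.sub hr).mul hψ).div_const B).intervalIntegrable 0 1)
  simp only [intervalIntegral.integral_div, div_eq_zero_iff, hB, or_false, sub_mul] at hzero
  rwa [integral_sub (f := fun x => k * ψ x) (g := fun x => r x * ψ x)
    ((continuous_const.mul hψ).intervalIntegrable _ _) ((hr.mul hψ).intervalIntegrable _ _),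
    intervalIntegral.integral_const_mul, sub_eq_zero] at hzero

theorem abs_flux_le (hB : 0 < B) (hD : ContDiff ℝ 2 D) (hDpos : ∀ x, 0 < D x)
    (hDper : Periodic D 1) (hr : Continuous r) {M : ℝ} (hM : ∀ x, |r x| ≤ M) (y : ℝ) :
    |flux q D ψ y| ≤ 2 * M * (∫ x in (0 : ℝ)..1, ψ x) / B := by
  have ⟨hψ, hψpos, hψper, _⟩ := he
  have hψc := hψ.continuous
  have hk := abs_le_of_mul_integral_eq_integral_mul hr hψc hψpos hM
    (he.mul_integral_eq hB.ne' hD hDper hr)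
  obtain ⟨x₀, hx₀⟩ := exists_flux_eq_zero (q := q) (hD.differentiable two_ne_zero) hDpos hDper
    (hψ.differentiable two_ne_zero) hψper
  have hbound := (periodic_flux hDper hψper).abs_le_integral_of_hasDerivAt one_pos
    (h := fun x => 2 * M * ψ x / B) (he.hasDerivAt_flux hB.ne' hD)
    (((continuous_const.sub hr).mul hψc).div_const B) ((continuous_const.mul hψc).div_const B)
    (fun x => by simp only [hψper x]) (fun x => ?_) hx₀ y
  · rwa [intervalIntegral.integral_div, intervalIntegral.integral_const_mul] at hbound
  · rw [abs_div, abs_of_pos hB, abs_mul, abs_of_pos (hψpos x)]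
    have hψx := (hψpos x).le
    gcongr
    linarith [abs_sub k (r x), hM x]

theorem integral_rpow_mul_pos (hD : Continuous D) (hDpos : ∀ x, 0 < D x) :
    0 < ∫ x in (0 : ℝ)..1, D x ^ q * ψ x :=
  intervalIntegral_pos_of_pos_on
    (((hD.rpow_const fun x => Or.inl (hDpos x).ne').mul he.1.continuous).intervalIntegrable _ _)
    (fun x _ => mul_pos (rpow_pos_of_pos (hDpos x) _) (he.2.1 x)) one_pos

theorem abs_rpow_mul_div_integral_sub_one_le (hB : 0 < B) (hD : ContDiff ℝ 2 D)
    (hDpos : ∀ x, 0 < D x) (hDper : Periodic D 1) (hr : Continuous r) {M c₁ c₂ : ℝ}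
    (hM : ∀ x, |r x| ≤ M) (hc₁ : ∀ x, D x ^ (q - 1) ≤ c₁) (hc₂ : ∀ x, D x ^ (-q) ≤ c₂)
    {x : ℝ} (hx : x ∈ Icc (0 : ℝ) 1) :
    |D x ^ q * ψ x / (∫ y in (0 : ℝ)..1, D y ^ q * ψ y) - 1| ≤ 2 * M * c₁ * c₂ / B := by
  have ⟨hψ, hψpos, _, _⟩ := he
  have hu : Continuous fun y => D y ^ q * ψ y :=
    (hD.continuous.rpow_const fun y => Or.inl (hDpos y).ne').mul hψ.continuous
  have hI := he.integral_rpow_mul_pos hD.continuous hDpos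
  have hM0 : 0 ≤ M := (abs_nonneg _).trans (hM 0)
  have hc₁0 : 0 ≤ c₁ := (rpow_pos_of_pos (hDpos 0) _).le.trans (hc₁ 0)
  have hJI : ∫ y in (0 : ℝ)..1, ψ y ≤ c₂ * ∫ y in (0 : ℝ)..1, D y ^ q * ψ y := by
    rw [← intervalIntegral.integral_const_mul]
    refine integral_mono_on zero_le_one (hψ.continuous.intervalIntegrable _ _)
      ((continuous_const.mul hu).intervalIntegrable _ _) fun y _ => ?_
    calc ψ y = D y ^ (-q) * (D y ^ q * ψ y) := by
          rw [rpow_neg (hDpos y).le, inv_mul_cancel_left₀ (rpow_pos_of_pos (hDpos y) _).ne']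
      _ ≤ c₂ * (D y ^ q * ψ y) :=
          mul_le_mul_of_nonneg_right (hc₂ y) (mul_pos (rpow_pos_of_pos (hDpos y) _) (hψpos y)).le
  have hosc := abs_sub_integral_le_of_hasDerivAt
    (hasDerivAt_rpow_mul (hD.differentiable two_ne_zero) hDpos (hψ.differentiable two_ne_zero))
    (fun y _ => by
      rw [abs_mul, abs_of_pos (rpow_pos_of_pos (hDpos y) _)]
      exact mul_le_mul (hc₁ y) (he.abs_flux_le hB hD hDpos hDper hr hM y) (abs_nonneg _)
        hc₁0) hx
  rw [div_sub_one hI.ne', abs_div, abs_of_pos hI, div_le_iff₀ hI]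
  calc _ ≤ c₁ * (2 * M * (∫ y in (0 : ℝ)..1, ψ y) / B) := hosc
    _ ≤ c₁ * (2 * M * (c₂ * ∫ y in (0 : ℝ)..1, D y ^ q * ψ y) / B) := by gcongr
    _ = _ := by ring

theorem eq_integral_div_integral (hB : B ≠ 0) (hD : ContDiff ℝ 2 D) (hDpos : ∀ x, 0 < D x)
    (hDper : Periodic D 1) (hr : Continuous r) {c : ℝ} (hc : c ≠ 0) :
    k = (∫ x in (0 : ℝ)..1, r x * D x ^ (-q) * (D x ^ q * ψ x / c)) /
      ∫ x in (0 : ℝ)..1, D x ^ (-q) * (D x ^ q * ψ x / c) := by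
  have hcancel : ∀ x, D x ^ (-q) * (D x ^ q * ψ x / c) = ψ x / c := fun x => by
    rw [mul_div_assoc, rpow_neg (hDpos x).le,
      inv_mul_cancel_left₀ (rpow_pos_of_pos (hDpos x) _).ne']
  have hJ : 0 < ∫ x in (0 : ℝ)..1, ψ x :=
    intervalIntegral_pos_of_pos_on (he.1.continuous.intervalIntegrable _ _)
      (fun x _ => he.2.1 x) one_pos
  have hcancel' : ∀ x, r x * D x ^ (-q) * (D x ^ q * ψ x / c) = r x * ψ x / c := fun x => by
    rw [mul_assoc, hcancel, mul_div_assoc]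
  simp only [hcancel, hcancel', intervalIntegral.integral_div]
  rw [div_div_div_cancel_right₀ hc, ← he.mul_integral_eq hB hD hDper hr,
    mul_div_cancel_right₀ _ hJ.ne']

end IsEigenpair

end Eigenpair

/-- Proposition `largeD`. The principal eigenvalue of `L_q^0[r; B·D]`
converges, as `B → +∞`, to the `D^{−q}`-weighted mean of `r`. -/
theorem stmt_6 (q : ℝ) (D r : ℝ → ℝ) (hD : ContDiff ℝ 2 D) (hDpos : ∀ x, 0 < D x)
    (hDper : Function.Periodic D 1) (hr : Continuous r) (hrper : Function.Periodic r 1)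
    (k : ℝ → ℝ) (ψ : ℝ → ℝ → ℝ)
    (hk : ∀ B > (0 : ℝ), IsEigenpair q 0 r (fun x => B * D x) (k B) (ψ B)) :
    Tendsto k atTop
      (𝓝 ((∫ x in (0:ℝ)..1, r x * D x ^ (-q)) / ∫ x in (0:ℝ)..1, D x ^ (-q))) := by
  have hDrpow : ∀ p : ℝ, Continuous fun x => D x ^ p := fun p =>
    hD.continuous.rpow_const fun x => Or.inl (hDpos x).ne'
  have hDrpow_per : ∀ p : ℝ, Periodic (fun x => D x ^ p) 1 := fun p x => by
    simp only [hDper x]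
  obtain ⟨M, hM⟩ := hrper.exists_abs_le one_ne_zero hr
  obtain ⟨c₁, hc₁⟩ := (hDrpow_per (q - 1)).exists_abs_le one_ne_zero (hDrpow _)
  obtain ⟨c₂, hc₂⟩ := (hDrpow_per (-q)).exists_abs_le one_ne_zero (hDrpow _)
  set v : ℝ → ℝ → ℝ := fun B x => D x ^ q * ψ B x / ∫ y in (0 : ℝ)..1, D y ^ q * ψ B y
  have hv : ∀ B > 0, Continuous (v B) := fun B hB =>
    ((hDrpow q).mul (hk B hB).1.continuous).div_const _
  have hvC : ∀ B > 0, ∀ x ∈ Icc (0 : ℝ) 1, |v B x - 1| ≤ 2 * M * c₁ * c₂ / B :=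
    fun B hB x hx => (hk B hB).abs_rpow_mul_div_integral_sub_one_le hB hD hDpos hDper hr hM
      (fun x => (le_abs_self _).trans (hc₁ x)) (fun x => (le_abs_self _).trans (hc₂ x)) hx
  have hmass : 0 < ∫ x in (0 : ℝ)..1, D x ^ (-q) :=
    intervalIntegral_pos_of_pos_on ((hDrpow _).intervalIntegrable _ _)
      (fun x _ => rpow_pos_of_pos (hDpos x) _) one_pos
  refine ((tendsto_integral_mul_of_abs_sub_one_le (hr.mul (hDrpow _)) hv hvC).div
    (tendsto_integral_mul_of_abs_sub_one_le (hDrpow _) hv hvC) hmass.ne').congr' ?_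
  filter_upwards [eventually_gt_atTop 0] with B hB
  exact ((hk B hB).eq_integral_div_integral hB.ne' hD hDpos hDper hr
    ((hk B hB).integral_rpow_mul_pos hD.continuous hDpos).ne').symm
end
end
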